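/- Bias-localization bound: in the setting of the context, fix a parameter θ with all blocks (θ_k)_{N_{−k}^r} equal to 0, a start state-action distribution ν with visitation d = d_ν^{π_θ}, a comparator distribution d*(s,a) = d_μ^{π*}(s)π*(a|s), and W, B, ω_r ≥ 0, κ' ≥ 0. Assume: (i) ‖∇_{θ_k} log π_θ(a|s)‖₂ ≤ B and ‖∇_{(θ_k)_{N_{−k}^r}} log π_{θ_k}(a_k|s)‖₂ ≤ ω_r for all k, s, a; (ii) the exponential decay property holds with constants c, c' ≥ 0, ψ, φ ∈ (0,1): for all k, r', and (s,a),(s̃,ã) agreeing on N_k^{r'}, |Q_k^{π_θ}(s,a) − Q_k^{π_θ}(s̃,ã)| ≤ cψ^{r'+1} and |V_k^{π_θ}(s) − V_k^{π_θ}(s̃)| ≤ c'φ^{r'+1}; (iii) for all k and all vectors w, wᵀ Σ_{d*,k}^θ w ≤ κ' · wᵀ Σ_{ν,k}^θ w. Let w_{k,*} ∈ argmin{ L̃_k(w, θ, d) : ‖w‖₂ ≤ W } and w'_{k,*} ∈ argmin{ L_k(w, θ, d) : ‖w‖₂ ≤ W }, and set ε_{bias,r} = max_k L̃_k(w_{k,*},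 θ, d*) and ε_bias = max_k L_k(w'_{k,*}, θ, d*). Then ε_{bias,r} ≤ ε_bias + e_r + 2·(2/(1−γ) + WB)·√(2κ' e_r/(1−γ)) + 2κ' e_r/(1−γ), where e_r = (4/(1−γ) + 2WB)·W ω_r + (4/(1−γ) + 2WB)·(c ψ^{r+1} + c' φ^{r+1}). -/

import Mathlib

open scoped BigOperators RealInnerProductSpace

noncomputable section

/-- `t`-step laws of a Markov chain on a finite space with one-step kernel `T`, started
at the Dirac mass at `x`. -/
def chainLaw {X : Type*} [Fintype X] [DecidableEq X] (T : X → X → ℝ) :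
    ℕ → X → X → ℝ
  | 0, x, y => if y = x then 1 else 0
  | t + 1, x, y => ∑ z, chainLaw T t x z * T z y

/-- Projection of the gradient of `f` at `θ` onto the coordinates selected by `sel`. -/
def projGrad {I : Type*} [Fintype I] (sel : I → Prop) [DecidablePred sel]
    (f : EuclideanSpace ℝ I → ℝ) (θ : EuclideanSpace ℝ I) : EuclideanSpace ℝ I :=
  WithLp.toLp 2 (fun i => if sel i then gradient f θ i else 0)

/-- Quadratic loss `∑ₓ ζ(x) (target(x) - ⟨feat(x), w⟩)²`. -/
def quadLoss {X : Type*} [Fintype X] {I : Type*} [Fintype I] (ζ : X → ℝ)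
    (target : X → ℝ) (feat : X → EuclideanSpace ℝ I) (wv : EuclideanSpace ℝ I) : ℝ :=
  ∑ x, ζ x * (target x - ⟪feat x, wv⟫) ^ 2

section MDP

variable {K : Type*} [Fintype K] [DecidableEq K]
  {S A : K → Type*} [∀ k, Fintype (S k)] [∀ k, DecidableEq (S k)]
  [∀ k, Fintype (A k)] [∀ k, DecidableEq (A k)]

/-- One step state-action kernel `T((s',a')|(s,a)) = P(s'|s,a) ⋅ π(a'|s')` for a global
policy `p`. -/
def saKernelG (P : ∀ k, (∀ j, S j) × (∀ j, A j) → S k → ℝ)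
    (p : (∀ j, S j) → (∀ j, A j) → ℝ) :
    ((∀ j, S j) × (∀ j, A j)) → ((∀ j, S j) × (∀ j, A j)) → ℝ :=
  fun x y => (∏ j, P j x (y.1 j)) * p y.1 y.2

/-- The local Q-function of agent `k` for a global policy `p`. -/
def QfunG (P : ∀ k, (∀ j, S j) × (∀ j, A j) → S k → ℝ)
    (p : (∀ j, S j) → (∀ j, A j) → ℝ) (rw : ∀ k, S k → A k → ℝ) (γ : ℝ) (k : K)
    (x : (∀ j, S j) × (∀ j, A j)) : ℝ :=
  ∑' t : ℕ, γ ^ t * ∑ y, chainLaw (saKernelG P p) t x y * rw k (y.1 k) (y.2 k)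

/-- The local value function of agent `k`. -/
def VfunG (P : ∀ k, (∀ j, S j) × (∀ j, A j) → S k → ℝ)
    (p : (∀ j, S j) → (∀ j, A j) → ℝ) (rw : ∀ k, S k → A k → ℝ) (γ : ℝ) (k : K)
    (s : ∀ j, S j) : ℝ :=
  ∑ a, p s a * QfunG P p rw γ k (s, a)

/-- The local advantage function `A_k^π(s,a) = Q_k^π(s,a) - V_k^π(s)`. -/
def AdvLoc (P : ∀ k, (∀ j, S j) × (∀ j, A j) → S k → ℝ)
    (p : (∀ j, S j) → (∀ j, A j) → ℝ) (rw : ∀ k, S k → A k → ℝ) (γ : ℝ) (k : K)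
    (x : (∀ j, S j) × (∀ j, A j)) : ℝ :=
  QfunG P p rw γ k x - VfunG P p rw γ k x.1

/-- The expected global value function `V^π(μ)`. -/
def VrhoG (P : ∀ k, (∀ j, S j) × (∀ j, A j) → S k → ℝ)
    (p : (∀ j, S j) → (∀ j, A j) → ℝ) (rw : ∀ k, S k → A k → ℝ) (γ : ℝ)
    (ρs : (∀ j, S j) → ℝ) : ℝ :=
  ∑ s, ρs s * ((Fintype.card K : ℝ)⁻¹ * ∑ k, VfunG P p rw γ k s)

/-- One step kernel of the state chain. -/
def stateKernel (P : ∀ k, (∀ j, S j) × (∀ j, A j) → S k → ℝ)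
    (p : (∀ j, S j) → (∀ j, A j) → ℝ) : (∀ j, S j) → (∀ j, S j) → ℝ :=
  fun s s' => ∑ a, p s a * ∏ j, P j (s, a) (s' j)

/-- The discounted state visitation distribution `d_μ^π`. -/
def dvisit (P : ∀ k, (∀ j, S j) × (∀ j, A j) → S k → ℝ)
    (p : (∀ j, S j) → (∀ j, A j) → ℝ) (γ : ℝ) (ρs : (∀ j, S j) → ℝ)
    (s : ∀ j, S j) : ℝ :=
  (1 - γ) * ∑' t : ℕ, γ ^ t * ∑ s0, ρs s0 * chainLaw (stateKernel P p) t s0 s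

/-- The discounted state-action visitation distribution `d_ν^π`. -/
def dvisitSA (P : ∀ k, (∀ j, S j) × (∀ j, A j) → S k → ℝ)
    (p : (∀ j, S j) → (∀ j, A j) → ℝ) (γ : ℝ)
    (ν : (∀ j, S j) × (∀ j, A j) → ℝ) (x : (∀ j, S j) × (∀ j, A j)) : ℝ :=
  (1 - γ) * ∑' t : ℕ, γ ^ t * ∑ x0, ν x0 * chainLaw (saKernelG P p) t x0 x

/-- Localized Q-function `Q̃_k^π(s_{N_k^r}, a_{N_k^r})`. -/
def Qtilde (G : SimpleGraph K) (r : ℕ)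
    (P : ∀ k, (∀ j, S j) × (∀ j, A j) → S k → ℝ)
    (p : (∀ j, S j) → (∀ j, A j) → ℝ) (rw : ∀ k, S k → A k → ℝ) (γ : ℝ)
    (lam : ∀ _ : K, (∀ j, S j) × (∀ j, A j) → ℝ) (k : K)
    (x : (∀ j, S j) × (∀ j, A j)) : ℝ :=
  ∑ y : (∀ j, S j) × (∀ j, A j), lam k y *
    QfunG P p rw γ k
      (fun j => if G.dist k j ≤ r then x.1 j else y.1 j,
       fun j => if G.dist k j ≤ r then x.2 j else y.2 j)

/-- Localized value function `Ṽ_k^π(s_{N_k^r})`. -/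
def Vtilde (G : SimpleGraph K) (r : ℕ)
    (P : ∀ k, (∀ j, S j) × (∀ j, A j) → S k → ℝ)
    (p : (∀ j, S j) → (∀ j, A j) → ℝ) (rw : ∀ k, S k → A k → ℝ) (γ : ℝ)
    (lam : ∀ _ : K, (∀ j, S j) × (∀ j, A j) → ℝ) (k : K) (s : ∀ j, S j) : ℝ :=
  ∑ y : (∀ j, S j) × (∀ j, A j), lam k y *
    VfunG P p rw γ k (fun j => if G.dist k j ≤ r then s j else y.1 j)

/-- Localized advantage function `Ã_k^π = Q̃_k^π - Ṽ_k^π`. -/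
def Atilde (G : SimpleGraph K) (r : ℕ)
    (P : ∀ k, (∀ j, S j) × (∀ j, A j) → S k → ℝ)
    (p : (∀ j, S j) → (∀ j, A j) → ℝ) (rw : ∀ k, S k → A k → ℝ) (γ : ℝ)
    (lam : ∀ _ : K, (∀ j, S j) × (∀ j, A j) → ℝ) (k : K)
    (x : (∀ j, S j) × (∀ j, A j)) : ℝ :=
  Qtilde G r P p rw γ lam k x - Vtilde G r P p rw γ lam k x.1

end MDP

set_option linter.unusedSectionVars false
set_option linter.unusedVariables false
set_option maxHeartbeats 1000000

lemma chainLaw_nonneg {X : Type*} [Fintype X] [DecidableEq X] {T : X → X → ℝ}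
    (hT : ∀ x y, 0 ≤ T x y) (t : ℕ) (x : X) : ∀ y, 0 ≤ chainLaw T t x y := by
  induction t with
  | zero => intro y; simp only [chainLaw]; split <;> norm_num
  | succ n ih =>
    intro y
    simp only [chainLaw]
    exact Finset.sum_nonneg fun z _ => mul_nonneg (ih z) (hT z y)

lemma chainLaw_sum {X : Type*} [Fintype X] [DecidableEq X] {T : X → X → ℝ}
    (hT : ∀ z, ∑ y, T z y = 1) (t : ℕ) (x : X) : ∑ y, chainLaw T t x y = 1 := by
  induction t with
  | zero => simp [chainLaw]
  | succ n ih =>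
    simp only [chainLaw]
    rw [Finset.sum_comm]
    calc ∑ z, ∑ y, chainLaw T n x z * T z y
        = ∑ z, chainLaw T n x z * ∑ y, T z y := by
          refine Finset.sum_congr rfl fun z _ => ?_; rw [Finset.mul_sum]
      _ = 1 := by simp_rw [hT]; simpa using ih

lemma sum_pi_prod {K : Type*} [Fintype K] [DecidableEq K] {β : K → Type*}
    [∀ k, Fintype (β k)] [∀ k, DecidableEq (β k)] (g : ∀ k, β k → ℝ) :
    ∑ f : ∀ k, β k, ∏ k, g k (f k) = ∏ k, ∑ b, g k b := by
  rw [Finset.prod_univ_sum]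
  rw [Fintype.piFinset_univ]

lemma summable_disc {γ : ℝ} (hγ0 : 0 ≤ γ) (hγ1 : γ < 1) {m : ℕ → ℝ}
    (h0 : ∀ t, 0 ≤ m t) (h1 : ∀ t, m t ≤ 1) : Summable (fun t => γ ^ t * m t) :=
  Summable.of_nonneg_of_le (fun t => mul_nonneg (pow_nonneg hγ0 t) (h0 t))
    (fun t => (mul_le_of_le_one_right (pow_nonneg hγ0 t) (h1 t)))
    (summable_geometric_of_lt_one hγ0 hγ1)

lemma tsum_disc_nonneg {γ : ℝ} (hγ0 : 0 ≤ γ) {m : ℕ → ℝ} (h0 : ∀ t, 0 ≤ m t) :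
    0 ≤ ∑' t, γ ^ t * m t :=
  tsum_nonneg fun t => mul_nonneg (pow_nonneg hγ0 t) (h0 t)

lemma tsum_disc_le {γ : ℝ} (hγ0 : 0 ≤ γ) (hγ1 : γ < 1) {m : ℕ → ℝ}
    (h0 : ∀ t, 0 ≤ m t) (h1 : ∀ t, m t ≤ 1) : ∑' t, γ ^ t * m t ≤ (1 - γ)⁻¹ := by
  rw [← tsum_geometric_of_lt_one hγ0 hγ1]
  exact Summable.tsum_le_tsum (fun t => mul_le_of_le_one_right (pow_nonneg hγ0 t) (h1 t))
    (summable_disc hγ0 hγ1 h0 h1) (summable_geometric_of_lt_one hγ0 hγ1)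

lemma aux_fo {C D : ℝ} (hD : 0 ≤ D) (h : ∀ t : ℝ, 0 < t → t ≤ 1 → 2 * t * C ≤ t ^ 2 * D) :
    C ≤ 0 := by
  by_contra hC
  push_neg at hC
  rcases eq_or_lt_of_le hD with hD0 | hD0
  · have := h 1 one_pos le_rfl; rw [← hD0] at this; nlinarith
  · set t := min 1 (C / D) with ht
    have ht0 : 0 < t := lt_min one_pos (div_pos hC hD0)
    have ht1 : t ≤ 1 := min_le_left _ _
    have h2 := h t ht0 ht1
    have htD : t * D ≤ C := by
      have := min_le_right 1 (C / D)
      calc t * D ≤ (C / D) * D := by nlinarith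
        _ = C := div_mul_cancel₀ _ (ne_of_gt hD0)
    nlinarith

lemma sum_abs_le_sqrt {X : Type*} [Fintype X] {ζ f : X → ℝ} (hζ0 : ∀ x, 0 ≤ ζ x)
    (hζ1 : ∑ x, ζ x ≤ 1) : ∑ x, ζ x * |f x| ≤ Real.sqrt (∑ x, ζ x * f x ^ 2) := by
  have key : (∑ x, ζ x * |f x|) ^ 2 ≤ ∑ x, ζ x * f x ^ 2 := by
    have h1 : ∑ x, ζ x * |f x| = ∑ x, Real.sqrt (ζ x) * (Real.sqrt (ζ x) * |f x|) := by
      refine Finset.sum_congr rfl fun x _ => ?_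
      rw [← mul_assoc, Real.mul_self_sqrt (hζ0 x)]
    have h2 := Finset.sum_mul_sq_le_sq_mul_sq Finset.univ
      (fun x => Real.sqrt (ζ x)) (fun x => Real.sqrt (ζ x) * |f x|)
    rw [h1]
    have h3 : ∑ x, Real.sqrt (ζ x) ^ 2 = ∑ x, ζ x := by
      refine Finset.sum_congr rfl fun x _ => Real.sq_sqrt (hζ0 x)
    have h4 : ∑ x, (Real.sqrt (ζ x) * |f x|) ^ 2 = ∑ x, ζ x * f x ^ 2 := by
      refine Finset.sum_congr rfl fun x _ => ?_
      rw [mul_pow, Real.sq_sqrt (hζ0 x), sq_abs]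
    calc (∑ x, Real.sqrt (ζ x) * (Real.sqrt (ζ x) * |f x|)) ^ 2
        ≤ (∑ x, Real.sqrt (ζ x) ^ 2) * ∑ x, (Real.sqrt (ζ x) * |f x|) ^ 2 := h2
      _ ≤ 1 * ∑ x, ζ x * f x ^ 2 := by
          rw [h3, h4]
          apply mul_le_mul_of_nonneg_right hζ1
          exact Finset.sum_nonneg fun x _ => mul_nonneg (hζ0 x) (sq_nonneg _)
      _ = ∑ x, ζ x * f x ^ 2 := one_mul _
  have h0 : 0 ≤ ∑ x, ζ x * |f x| :=
    Finset.sum_nonneg fun x _ => mul_nonneg (hζ0 x) (abs_nonneg _)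
  exact (Real.le_sqrt h0 (Finset.sum_nonneg fun x _ => mul_nonneg (hζ0 x) (sq_nonneg _))).mpr key

lemma disc_total {X : Type*} [Fintype X] {γ : ℝ} (hγ0 : 0 ≤ γ) (hγ1 : γ < 1)
    {h : ℕ → X → ℝ} (h0 : ∀ t x, 0 ≤ h t x) (h1 : ∀ t, ∑ x, h t x = 1) :
    ∑ x, (1 - γ) * ∑' t : ℕ, γ ^ t * h t x = 1 := by
  have hb : ∀ t x, h t x ≤ 1 := by
    intro t x
    have hs := Finset.single_le_sum (f := h t) (fun y _ => h0 t y) (Finset.mem_univ x)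
    rw [h1 t] at hs
    exact hs
  have hsum : ∀ x : X, Summable (fun t => γ ^ t * h t x) := fun x =>
    summable_disc hγ0 hγ1 (fun t => h0 t x) (fun t => hb t x)
  calc ∑ x, (1 - γ) * ∑' t : ℕ, γ ^ t * h t x
      = (1 - γ) * ∑ x, ∑' t : ℕ, γ ^ t * h t x := by rw [Finset.mul_sum]
    _ = (1 - γ) * ∑' t : ℕ, ∑ x, γ ^ t * h t x := by
        rw [Summable.tsum_finsetSum (fun x _ => hsum x)]
    _ = (1 - γ) * ∑' t : ℕ, γ ^ t := by
        congr 1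
        refine tsum_congr fun t => ?_
        rw [← Finset.mul_sum, h1 t, mul_one]
    _ = 1 := by
        rw [tsum_geometric_of_lt_one hγ0 hγ1]
        exact mul_inv_cancel₀ (by linarith)

lemma inner_eu {I : Type*} [Fintype I] (x y : EuclideanSpace ℝ I) :
    ⟪x, y⟫ = ∑ i, x i * y i := by
  simp [PiLp.inner_apply, RCLike.inner_apply]
  exact Finset.sum_congr rfl fun i _ => mul_comm _ _

lemma norm_eu {I : Type*} [Fintype I] (x : EuclideanSpace ℝ I) :
    ‖x‖ = Real.sqrt (∑ i, x i ^ 2) := by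
  rw [EuclideanSpace.norm_eq]
  congr 1
  exact Finset.sum_congr rfl fun i _ => by rw [Real.norm_eq_abs, sq_abs]

lemma projGrad_norm_mono {I : Type*} [Fintype I] (sel sel' : I → Prop)
    [DecidablePred sel] [DecidablePred sel'] (himp : ∀ i, sel' i → sel i)
    (f : EuclideanSpace ℝ I → ℝ) (θ : EuclideanSpace ℝ I) :
    ‖projGrad sel' f θ‖ ≤ ‖projGrad sel f θ‖ := by
  rw [norm_eu, norm_eu]
  apply Real.sqrt_le_sqrt
  apply Finset.sum_le_sum
  intro i _
  simp only [projGrad, PiLp.toLp_apply]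
  by_cases h : sel' i
  · rw [if_pos h, if_pos (himp i h)]
  · rw [if_neg h]; simpa using sq_nonneg (if sel i then gradient f θ i else 0)

lemma inner_split {I : Type*} [Fintype I] (P Q : I → Prop) [DecidablePred P] [DecidablePred Q]
    (f : EuclideanSpace ℝ I → ℝ) (θ w : EuclideanSpace ℝ I) :
    ⟪projGrad P f θ, w⟫ =
      ⟪projGrad (fun i => P i ∧ Q i) f θ, w⟫ + ⟪projGrad (fun i => P i ∧ ¬ Q i) f θ, w⟫ := by
  rw [inner_eu, inner_eu, inner_eu, ← Finset.sum_add_distrib]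
  refine Finset.sum_congr rfl fun i _ => ?_
  simp only [projGrad, PiLp.toLp_apply]
  by_cases hP : P i
  · by_cases hQ : Q i <;> simp [hP, hQ]
  · simp [hP]

lemma inner_eq_of_agree {I : Type*} [Fintype I] (g w w' : EuclideanSpace ℝ I)
    (h : ∀ i, g i ≠ 0 → w i = w' i) : ⟪g, w⟫ = ⟪g, w'⟫ := by
  rw [inner_eu, inner_eu]
  refine Finset.sum_congr rfl fun i _ => ?_
  by_cases hg : g i = 0
  · rw [hg, zero_mul, zero_mul]
  · rw [h i hg]

-- quadratic expansion
lemma quadLoss_expand {X : Type*} [Fintype X] {I : Type*} [Fintype I] (ζ : X → ℝ)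
    (target : X → ℝ) (feat : X → EuclideanSpace ℝ I) (w u : EuclideanSpace ℝ I) (t : ℝ) :
    quadLoss ζ target feat (w + t • u) = quadLoss ζ target feat w
      - 2 * t * ∑ x, ζ x * ((target x - ⟪feat x, w⟫) * ⟪feat x, u⟫)
      + t ^ 2 * ∑ x, ζ x * ⟪feat x, u⟫ ^ 2 := by
  simp only [quadLoss, inner_add_right, real_inner_smul_right]
  rw [Finset.mul_sum, Finset.mul_sum, ← Finset.sum_sub_distrib, ← Finset.sum_add_distrib]
  exact Finset.sum_congr rfl fun x _ => by ring

lemma quad_min_gap {X : Type*} [Fintype X] {I : Type*} [Fintype I] {ζ : X → ℝ}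
    (hζ0 : ∀ x, 0 ≤ ζ x) (target : X → ℝ) (feat : X → EuclideanSpace ℝ I)
    {w v : EuclideanSpace ℝ I}
    (hmin : ∀ t : ℝ, 0 < t → t ≤ 1 →
      quadLoss ζ target feat w ≤ quadLoss ζ target feat (w + t • (v - w))) :
    (∑ x, ζ x * ⟪feat x, v - w⟫ ^ 2) ≤ quadLoss ζ target feat v - quadLoss ζ target feat w := by
  set C := ∑ x, ζ x * ((target x - ⟪feat x, w⟫) * ⟪feat x, v - w⟫) with hC
  set D := ∑ x, ζ x * ⟪feat x, v - w⟫ ^ 2 with hD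
  have hD0 : 0 ≤ D := Finset.sum_nonneg fun x _ => mul_nonneg (hζ0 x) (sq_nonneg _)
  have hCle : C ≤ 0 := by
    apply aux_fo hD0
    intro t ht0 ht1
    have := hmin t ht0 ht1
    rw [quadLoss_expand ζ target feat w (v - w) t] at this
    linarith
  have h1 := quadLoss_expand ζ target feat w (v - w) 1
  rw [one_smul, add_sub_cancel] at h1
  rw [h1]
  nlinarith

lemma quadLoss_compare {X : Type*} [Fintype X] {I : Type*} [Fintype I] {ζ : X → ℝ}
    {t1 t2 : X → ℝ} {f1 f2 : X → EuclideanSpace ℝ I} {w1 w2 : EuclideanSpace ℝ I}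
    {M η : ℝ} (hζ0 : ∀ x, 0 ≤ ζ x) (hζ1 : ∑ x, ζ x ≤ 1) (hM : 0 ≤ M) (hη : 0 ≤ η)
    (hM1 : ∀ x, |t1 x - ⟪f1 x, w1⟫| ≤ M) (hM2 : ∀ x, |t2 x - ⟪f2 x, w2⟫| ≤ M)
    (hd : ∀ x, |(t1 x - ⟪f1 x, w1⟫) - (t2 x - ⟪f2 x, w2⟫)| ≤ η) :
    quadLoss ζ t1 f1 w1 ≤ quadLoss ζ t2 f2 w2 + 2 * M * η := by
  have key : ∀ x, (t1 x - ⟪f1 x, w1⟫) ^ 2 ≤ (t2 x - ⟪f2 x, w2⟫) ^ 2 + 2 * M * η := by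
    intro x
    obtain ⟨ha1, ha2⟩ := abs_le.mp (hM1 x)
    obtain ⟨hb1, hb2⟩ := abs_le.mp (hM2 x)
    obtain ⟨hc1, hc2⟩ := abs_le.mp (hd x)
    nlinarith
  calc quadLoss ζ t1 f1 w1
      ≤ ∑ x, ζ x * ((t2 x - ⟪f2 x, w2⟫) ^ 2 + 2 * M * η) := by
        apply Finset.sum_le_sum
        exact fun x _ => mul_le_mul_of_nonneg_left (key x) (hζ0 x)
    _ = quadLoss ζ t2 f2 w2 + (∑ x, ζ x) * (2 * M * η) := by
        simp only [quadLoss, mul_add, Finset.sum_add_distrib, Finset.sum_mul]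
    _ ≤ quadLoss ζ t2 f2 w2 + 1 * (2 * M * η) := by
        have : 0 ≤ 2 * M * η := by positivity
        nlinarith [Finset.sum_nonneg (fun x (_ : x ∈ Finset.univ) => mul_nonneg (hζ0 x) (sq_nonneg (t2 x - ⟪f2 x, w2⟫)))]
    _ = quadLoss ζ t2 f2 w2 + 2 * M * η := by ring

section MDPAux

variable {K : Type*} [Fintype K] [DecidableEq K]
  {S A : K → Type*} [∀ k, Fintype (S k)] [∀ k, DecidableEq (S k)]
  [∀ k, Fintype (A k)] [∀ k, DecidableEq (A k)]

lemma saKernelG_nonneg {P : ∀ k, (∀ j, S j) × (∀ j, A j) → S k → ℝ}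
    {p : (∀ j, S j) → (∀ j, A j) → ℝ} (hP0 : ∀ k x y, 0 ≤ P k x y)
    (hp0 : ∀ s a, 0 ≤ p s a) (x y : (∀ j, S j) × (∀ j, A j)) :
    0 ≤ saKernelG P p x y :=
  mul_nonneg (Finset.prod_nonneg fun j _ => hP0 j x (y.1 j)) (hp0 y.1 y.2)

lemma sum_prod_P_eq_one {P : ∀ k, (∀ j, S j) × (∀ j, A j) → S k → ℝ}
    (hP1 : ∀ k x, ∑ y, P k x y = 1) (x : (∀ j, S j) × (∀ j, A j)) :
    ∑ s' : ∀ j, S j, ∏ j, P j x (s' j) = 1 := by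
  rw [sum_pi_prod]
  simp [hP1]

lemma saKernelG_sum {P : ∀ k, (∀ j, S j) × (∀ j, A j) → S k → ℝ}
    {p : (∀ j, S j) → (∀ j, A j) → ℝ} (hP1 : ∀ k x, ∑ y, P k x y = 1)
    (hp1 : ∀ s, ∑ a, p s a = 1) (x : (∀ j, S j) × (∀ j, A j)) :
    ∑ y, saKernelG P p x y = 1 := by
  rw [Fintype.sum_prod_type]
  calc ∑ s' : ∀ j, S j, ∑ a' : ∀ j, A j, saKernelG P p x (s', a')
      = ∑ s' : ∀ j, S j, ∏ j, P j x (s' j) := by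
        refine Finset.sum_congr rfl fun s' _ => ?_
        simp only [saKernelG]
        rw [← Finset.mul_sum, hp1, mul_one]
    _ = 1 := sum_prod_P_eq_one hP1 x

lemma stateKernel_nonneg {P : ∀ k, (∀ j, S j) × (∀ j, A j) → S k → ℝ}
    {p : (∀ j, S j) → (∀ j, A j) → ℝ} (hP0 : ∀ k x y, 0 ≤ P k x y)
    (hp0 : ∀ s a, 0 ≤ p s a) (s s' : ∀ j, S j) : 0 ≤ stateKernel P p s s' :=
  Finset.sum_nonneg fun a _ => mul_nonneg (hp0 s a)
    (Finset.prod_nonneg fun j _ => hP0 j (s, a) (s' j))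

lemma stateKernel_sum {P : ∀ k, (∀ j, S j) × (∀ j, A j) → S k → ℝ}
    {p : (∀ j, S j) → (∀ j, A j) → ℝ} (hP1 : ∀ k x, ∑ y, P k x y = 1)
    (hp1 : ∀ s, ∑ a, p s a = 1) (s : ∀ j, S j) :
    ∑ s', stateKernel P p s s' = 1 := by
  simp only [stateKernel]
  rw [Finset.sum_comm]
  have h2 : ∀ a : ∀ j, A j, (∑ s' : ∀ j, S j, p s a * ∏ j, P j (s, a) (s' j)) = p s a := by
    intro a
    rw [← Finset.mul_sum, sum_prod_P_eq_one hP1 (s, a), mul_one]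
  rw [Finset.sum_congr rfl fun a _ => h2 a, hp1]

-- the per-step expected reward is in [0,1]
lemma chain_reward_mem {P : ∀ k, (∀ j, S j) × (∀ j, A j) → S k → ℝ}
    {p : (∀ j, S j) → (∀ j, A j) → ℝ} (hP0 : ∀ k x y, 0 ≤ P k x y)
    (hP1 : ∀ k x, ∑ y, P k x y = 1) (hp0 : ∀ s a, 0 ≤ p s a)
    (hp1 : ∀ s, ∑ a, p s a = 1) {rw : ∀ k, S k → A k → ℝ}
    (hrw : ∀ k s a, 0 ≤ rw k s a ∧ rw k s a ≤ 1) (k : K) (t : ℕ)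
    (x : (∀ j, S j) × (∀ j, A j)) :
    0 ≤ (∑ y, chainLaw (saKernelG P p) t x y * rw k (y.1 k) (y.2 k)) ∧
      (∑ y, chainLaw (saKernelG P p) t x y * rw k (y.1 k) (y.2 k)) ≤ 1 := by
  have hc0 := chainLaw_nonneg (saKernelG_nonneg hP0 hp0) t x
  constructor
  · exact Finset.sum_nonneg fun y _ => mul_nonneg (hc0 y) (hrw k (y.1 k) (y.2 k)).1
  · calc (∑ y, chainLaw (saKernelG P p) t x y * rw k (y.1 k) (y.2 k))
        ≤ ∑ y, chainLaw (saKernelG P p) t x y := by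
          apply Finset.sum_le_sum
          intro y _
          exact mul_le_of_le_one_right (hc0 y) (hrw k (y.1 k) (y.2 k)).2
      _ = 1 := chainLaw_sum (saKernelG_sum hP1 hp1) t x

lemma QfunG_bounds {P : ∀ k, (∀ j, S j) × (∀ j, A j) → S k → ℝ}
    {p : (∀ j, S j) → (∀ j, A j) → ℝ} (hP0 : ∀ k x y, 0 ≤ P k x y)
    (hP1 : ∀ k x, ∑ y, P k x y = 1) (hp0 : ∀ s a, 0 ≤ p s a)
    (hp1 : ∀ s, ∑ a, p s a = 1) {rw : ∀ k, S k → A k → ℝ}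
    (hrw : ∀ k s a, 0 ≤ rw k s a ∧ rw k s a ≤ 1) {γ : ℝ} (hγ0 : 0 ≤ γ) (hγ1 : γ < 1)
    (k : K) (x : (∀ j, S j) × (∀ j, A j)) :
    0 ≤ QfunG P p rw γ k x ∧ QfunG P p rw γ k x ≤ (1 - γ)⁻¹ := by
  have hm := fun t => chain_reward_mem hP0 hP1 hp0 hp1 hrw k t x
  exact ⟨tsum_disc_nonneg hγ0 (fun t => (hm t).1),
    tsum_disc_le hγ0 hγ1 (fun t => (hm t).1) (fun t => (hm t).2)⟩

lemma VfunG_bounds {P : ∀ k, (∀ j, S j) × (∀ j, A j) → S k → ℝ}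
    {p : (∀ j, S j) → (∀ j, A j) → ℝ} (hP0 : ∀ k x y, 0 ≤ P k x y)
    (hP1 : ∀ k x, ∑ y, P k x y = 1) (hp0 : ∀ s a, 0 ≤ p s a)
    (hp1 : ∀ s, ∑ a, p s a = 1) {rw : ∀ k, S k → A k → ℝ}
    (hrw : ∀ k s a, 0 ≤ rw k s a ∧ rw k s a ≤ 1) {γ : ℝ} (hγ0 : 0 ≤ γ) (hγ1 : γ < 1)
    (k : K) (s : ∀ j, S j) :
    0 ≤ VfunG P p rw γ k s ∧ VfunG P p rw γ k s ≤ (1 - γ)⁻¹ := by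
  have hQ := fun a => QfunG_bounds hP0 hP1 hp0 hp1 hrw hγ0 hγ1 k (s, a)
  constructor
  · exact Finset.sum_nonneg fun a _ => mul_nonneg (hp0 s a) (hQ a).1
  · have h1 : VfunG P p rw γ k s ≤ ∑ a, p s a * (1 - γ)⁻¹ :=
      Finset.sum_le_sum fun a _ => mul_le_mul_of_nonneg_left (hQ a).2 (hp0 s a)
    have h2 : (∑ a : ∀ j, A j, p s a * (1 - γ)⁻¹) = (1 - γ)⁻¹ := by
      rw [← Finset.sum_mul, hp1, one_mul]
    linarith

end MDPAux

section MixAux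

variable {X : Type*} [Fintype X] [DecidableEq X]

lemma mix_chain_nonneg {T : X → X → ℝ} (hT0 : ∀ x y, 0 ≤ T x y) {μ : X → ℝ}
    (hμ0 : ∀ x, 0 ≤ μ x) (t : ℕ) (x : X) : 0 ≤ ∑ x0, μ x0 * chainLaw T t x0 x :=
  Finset.sum_nonneg fun x0 _ => mul_nonneg (hμ0 x0) (chainLaw_nonneg hT0 t x0 x)

lemma mix_chain_sum {T : X → X → ℝ} (hT1 : ∀ z, ∑ y, T z y = 1) {μ : X → ℝ}
    (hμ1 : ∑ x, μ x = 1) (t : ℕ) : ∑ x, ∑ x0, μ x0 * chainLaw T t x0 x = 1 := by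
  rw [Finset.sum_comm]
  have h : ∀ x0 : X, ∑ x, μ x0 * chainLaw T t x0 x = μ x0 := by
    intro x0
    rw [← Finset.mul_sum, chainLaw_sum hT1 t x0, mul_one]
  rw [Finset.sum_congr rfl fun x0 _ => h x0, hμ1]

lemma mix_chain_le_one {T : X → X → ℝ} (hT0 : ∀ x y, 0 ≤ T x y)
    (hT1 : ∀ z, ∑ y, T z y = 1) {μ : X → ℝ} (hμ0 : ∀ x, 0 ≤ μ x)
    (hμ1 : ∑ x, μ x = 1) (t : ℕ) (x : X) : ∑ x0, μ x0 * chainLaw T t x0 x ≤ 1 := by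
  have h := Finset.single_le_sum
    (f := fun x => ∑ x0, μ x0 * chainLaw T t x0 x)
    (fun y _ => mix_chain_nonneg hT0 hμ0 t y) (Finset.mem_univ x)
  rw [mix_chain_sum hT1 hμ1 t] at h
  exact h

lemma mix_disc_total {γ : ℝ} (hγ0 : 0 ≤ γ) (hγ1 : γ < 1) {T : X → X → ℝ}
    (hT0 : ∀ x y, 0 ≤ T x y) (hT1 : ∀ z, ∑ y, T z y = 1) {μ : X → ℝ}
    (hμ0 : ∀ x, 0 ≤ μ x) (hμ1 : ∑ x, μ x = 1) :
    ∑ x, (1 - γ) * ∑' t : ℕ, γ ^ t * ∑ x0, μ x0 * chainLaw T t x0 x = 1 :=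
  disc_total hγ0 hγ1 (fun t x => mix_chain_nonneg hT0 hμ0 t x)
    (fun t => mix_chain_sum hT1 hμ1 t)

lemma mix_disc_nonneg {γ : ℝ} (hγ0 : 0 ≤ γ) (hγ1 : γ < 1) {T : X → X → ℝ}
    (hT0 : ∀ x y, 0 ≤ T x y) {μ : X → ℝ} (hμ0 : ∀ x, 0 ≤ μ x) (x : X) :
    0 ≤ (1 - γ) * ∑' t : ℕ, γ ^ t * ∑ x0, μ x0 * chainLaw T t x0 x :=
  mul_nonneg (by linarith) (tsum_disc_nonneg hγ0 fun t => mix_chain_nonneg hT0 hμ0 t x)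

lemma mix_disc_ge {γ : ℝ} (hγ0 : 0 ≤ γ) (hγ1 : γ < 1) {T : X → X → ℝ}
    (hT0 : ∀ x y, 0 ≤ T x y) (hT1 : ∀ z, ∑ y, T z y = 1) {μ : X → ℝ}
    (hμ0 : ∀ x, 0 ≤ μ x) (hμ1 : ∑ x, μ x = 1) (x : X) :
    (1 - γ) * μ x ≤ (1 - γ) * ∑' t : ℕ, γ ^ t * ∑ x0, μ x0 * chainLaw T t x0 x := by
  apply mul_le_mul_of_nonneg_left _ (by linarith : (0:ℝ) ≤ 1 - γ)
  have h00 : (γ : ℝ) ^ 0 * ∑ x0, μ x0 * chainLaw T 0 x0 x = μ x := by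
    simp [chainLaw]
  calc μ x = γ ^ 0 * ∑ x0, μ x0 * chainLaw T 0 x0 x := h00.symm
    _ ≤ ∑' t : ℕ, γ ^ t * ∑ x0, μ x0 * chainLaw T t x0 x := by
        apply Summable.le_tsum (summable_disc hγ0 hγ1
          (fun t => mix_chain_nonneg hT0 hμ0 t x)
          (fun t => mix_chain_le_one hT0 hT1 hμ0 hμ1 t x))
        intro j _
        exact mul_nonneg (pow_nonneg hγ0 j) (mix_chain_nonneg hT0 hμ0 j x)

lemma tilde_close_aux {lam : X → ℝ} (hlam0 : ∀ y, 0 ≤ lam y) (hlam1 : ∑ y, lam y = 1)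
    {F : X → ℝ} {q δ : ℝ} (hδ : ∀ y, |F y - q| ≤ δ) : |(∑ y, lam y * F y) - q| ≤ δ := by
  have heq : (∑ y, lam y * F y) - q = ∑ y, lam y * (F y - q) := by
    simp only [mul_sub, Finset.sum_sub_distrib, ← Finset.sum_mul, hlam1, one_mul]
  rw [heq]
  calc |∑ y, lam y * (F y - q)| ≤ ∑ y, |lam y * (F y - q)| := Finset.abs_sum_le_sum_abs _ _
    _ ≤ ∑ y, lam y * δ := by
        apply Finset.sum_le_sum
        intro y _
        rw [abs_mul, abs_of_nonneg (hlam0 y)]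
        exact mul_le_mul_of_nonneg_left (hδ y) (hlam0 y)
    _ = δ := by rw [← Finset.sum_mul, hlam1, one_mul]

end MixAux

/-- Abstract core of the bias-localization bound. -/
lemma key_bound {X : Type*} [Fintype X] {I : Type*} [Fintype I]
    {dstar dd ν : X → ℝ} {At Ad : X → ℝ} {gt gg hh : X → EuclideanSpace ℝ I}
    {wk wk' v : EuclideanSpace ℝ I} {W B ωr κ' γ δ M er : ℝ}
    (hγ1 : γ < 1)
    (hW : 0 ≤ W) (hB : 0 ≤ B) (hωr : 0 ≤ ωr) (hκ'0 : 0 ≤ κ') (hδ0 : 0 ≤ δ)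
    (hM : M = 2 / (1 - γ) + W * B) (her : er = 2 * M * (W * ωr + δ))
    (hdstar0 : ∀ x, 0 ≤ dstar x) (hdstar1 : ∑ x, dstar x ≤ 1)
    (hdd0 : ∀ x, 0 ≤ dd x) (hdd1 : ∑ x, dd x ≤ 1)
    (hν0 : ∀ x, 0 ≤ ν x) (hddν : ∀ x, (1 - γ) * ν x ≤ dd x)
    (hAt : ∀ x, |At x| ≤ 2 / (1 - γ)) (hAd : ∀ x, |Ad x| ≤ 2 / (1 - γ))
    (hclose : ∀ x, |At x - Ad x| ≤ δ)
    (hgt : ∀ x, ‖gt x‖ ≤ B) (hgg : ∀ x, ‖gg x‖ ≤ B)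
    (hsplit : ∀ x (w : EuclideanSpace ℝ I), ⟪gg x, w⟫ = ⟪gt x, w⟫ + ⟪hh x, w⟫)
    (hhh : ∀ x, ‖hh x‖ ≤ ωr)
    (hwk : ‖wk‖ ≤ W) (hwk' : ‖wk'‖ ≤ W) (hv : ‖v‖ ≤ W)
    (hgtwk : ∀ x, ⟪hh x, wk⟫ = 0)
    (hgtv : ∀ x, ⟪gt x, v⟫ = ⟪gt x, wk'⟫)
    (hmin : ∀ t : ℝ, 0 < t → t ≤ 1 →
      quadLoss dd At gt wk ≤ quadLoss dd At gt (wk + t • (v - wk)))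
    (hmin' : quadLoss dd Ad gg wk' ≤ quadLoss dd Ad gg wk)
    (hκ' : ∑ x, dstar x * ⟪gt x, wk - v⟫ ^ 2 ≤ κ' * ∑ x, ν x * ⟪gt x, wk - v⟫ ^ 2) :
    quadLoss dstar At gt wk ≤ quadLoss dstar Ad gg wk' + er
      + 2 * M * Real.sqrt (2 * κ' * er / (1 - γ)) + 2 * κ' * er / (1 - γ) := by
  have hg1 : (0:ℝ) < 1 - γ := by linarith
  have hM0 : 0 ≤ M := by rw [hM]; positivity
  have her0 : 0 ≤ er := by rw [her]; positivity
  set η := W * ωr + δ with hη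
  have hη0 : 0 ≤ η := by positivity
  have hres : ∀ (T : X → ℝ) (ft : X → EuclideanSpace ℝ I) (w : EuclideanSpace ℝ I),
      (∀ x, |T x| ≤ 2 / (1 - γ)) → (∀ x, ‖ft x‖ ≤ B) → ‖w‖ ≤ W →
      ∀ x, |T x - ⟪ft x, w⟫| ≤ M := by
    intro T ft w hT hft hw x
    have h1 : |⟪ft x, w⟫| ≤ B * W := by
      calc |⟪ft x, w⟫| ≤ ‖ft x‖ * ‖w‖ := abs_real_inner_le_norm _ _
        _ ≤ B * W := mul_le_mul (hft x) hw (norm_nonneg _) hB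
    obtain ⟨ha1, ha2⟩ := abs_le.mp (hT x)
    obtain ⟨hb1, hb2⟩ := abs_le.mp h1
    rw [hM]
    exact abs_le.mpr ⟨by nlinarith, by nlinarith⟩
  have hhb : ∀ x (w : EuclideanSpace ℝ I), ‖w‖ ≤ W → |⟪hh x, w⟫| ≤ ωr * W := by
    intro x w hw
    calc |⟪hh x, w⟫| ≤ ‖hh x‖ * ‖w‖ := abs_real_inner_le_norm _ _
      _ ≤ ωr * W := mul_le_mul (hhh x) hw (norm_nonneg _) hωr
  have hdv : ∀ x, |(At x - ⟪gt x, v⟫) - (Ad x - ⟪gg x, wk'⟫)| ≤ η := by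
    intro x
    have h1 : (At x - ⟪gt x, v⟫) - (Ad x - ⟪gg x, wk'⟫) = (At x - Ad x) + ⟪hh x, wk'⟫ := by
      rw [hgtv x, hsplit x wk']; ring
    rw [h1, hη]
    calc |(At x - Ad x) + ⟪hh x, wk'⟫| ≤ |At x - Ad x| + |⟪hh x, wk'⟫| := abs_add_le _ _
      _ ≤ δ + ωr * W := add_le_add (hclose x) (hhb x wk' hwk')
      _ = W * ωr + δ := by ring
  have hdw : ∀ x, |(Ad x - ⟪gg x, wk⟫) - (At x - ⟪gt x, wk⟫)| ≤ η := by
    intro x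
    have h1 : (Ad x - ⟪gg x, wk⟫) - (At x - ⟪gt x, wk⟫) = (Ad x - At x) := by
      rw [hsplit x wk, hgtwk x]; ring
    rw [h1, hη]
    have h2 : |Ad x - At x| ≤ δ := by rw [abs_sub_comm]; exact hclose x
    have h3 : 0 ≤ W * ωr := by positivity
    linarith
  -- optimality gap
  have hDgap := quad_min_gap hdd0 At gt hmin
  have hsq : ∀ x : X, ⟪gt x, v - wk⟫ ^ 2 = ⟪gt x, wk - v⟫ ^ 2 := by
    intro x
    rw [← neg_sub wk v, inner_neg_right]
    ring
  have hsumeq : ∑ x, dd x * ⟪gt x, v - wk⟫ ^ 2 = ∑ x, dd x * ⟪gt x, wk - v⟫ ^ 2 :=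
    Finset.sum_congr rfl fun x _ => by rw [hsq x]
  have h2 : quadLoss dd At gt v ≤ quadLoss dd Ad gg wk' + 2 * M * η :=
    quadLoss_compare hdd0 hdd1 hM0 hη0 (hres At gt v hAt hgt hv)
      (hres Ad gg wk' hAd hgg hwk') hdv
  have h3 : quadLoss dd Ad gg wk ≤ quadLoss dd At gt wk + 2 * M * η :=
    quadLoss_compare hdd0 hdd1 hM0 hη0 (hres Ad gg wk hAd hgg hwk)
      (hres At gt wk hAt hgt hwk) hdw
  have hDdd : ∑ x, dd x * ⟪gt x, wk - v⟫ ^ 2 ≤ 2 * er := by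
    rw [← hsumeq]
    have h4 : quadLoss dd Ad gg wk' ≤ quadLoss dd Ad gg wk := hmin'
    have h5 : er = 2 * M * η := her
    linarith
  -- transfer to d* via the condition number and the start distribution
  have hνdd : ∑ x, ν x * ⟪gt x, wk - v⟫ ^ 2
      ≤ (1 - γ)⁻¹ * ∑ x, dd x * ⟪gt x, wk - v⟫ ^ 2 := by
    rw [Finset.mul_sum]
    apply Finset.sum_le_sum
    intro x _
    have h0 := sq_nonneg (⟪gt x, wk - v⟫ : ℝ)
    have key := mul_le_mul_of_nonneg_left
      (mul_le_mul_of_nonneg_right (hddν x) h0) (inv_nonneg.mpr hg1.le)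
    calc ν x * ⟪gt x, wk - v⟫ ^ 2
        = (1 - γ)⁻¹ * ((1 - γ) * ν x * ⟪gt x, wk - v⟫ ^ 2) := by
          rw [← mul_assoc, ← mul_assoc, inv_mul_cancel₀ (ne_of_gt hg1), one_mul]
      _ ≤ (1 - γ)⁻¹ * (dd x * ⟪gt x, wk - v⟫ ^ 2) := key
  have hDstar : ∑ x, dstar x * ⟪gt x, wk - v⟫ ^ 2 ≤ 2 * κ' * er / (1 - γ) := by
    have h6 : ∑ x, ν x * ⟪gt x, wk - v⟫ ^ 2 ≤ (1 - γ)⁻¹ * (2 * er) :=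
      le_trans hνdd (mul_le_mul_of_nonneg_left hDdd (inv_nonneg.mpr hg1.le))
    calc ∑ x, dstar x * ⟪gt x, wk - v⟫ ^ 2
        ≤ κ' * ∑ x, ν x * ⟪gt x, wk - v⟫ ^ 2 := hκ'
      _ ≤ κ' * ((1 - γ)⁻¹ * (2 * er)) := mul_le_mul_of_nonneg_left h6 hκ'0
      _ = 2 * κ' * er / (1 - γ) := by rw [eq_div_iff (ne_of_gt hg1)]; field_simp
  -- expansion on d* around v
  have hexp := quadLoss_expand dstar At gt v (wk - v) 1
  have hvw : v + (1:ℝ) • (wk - v) = wk := by rw [one_smul]; abel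
  rw [hvw] at hexp
  set C := ∑ x, dstar x * ((At x - ⟪gt x, v⟫) * ⟪gt x, wk - v⟫) with hCdef
  set Ds := ∑ x, dstar x * ⟪gt x, wk - v⟫ ^ 2 with hDsdef
  have hC : -(M * ∑ x, dstar x * |⟪gt x, wk - v⟫|) ≤ C := by
    rw [Finset.mul_sum, ← Finset.sum_neg_distrib, hCdef]
    apply Finset.sum_le_sum
    intro x _
    have ha := abs_le.mp (hres At gt v hAt hgt hv x)
    have he1 := abs_nonneg (⟪gt x, wk - v⟫ : ℝ)
    have he2 := neg_abs_le (⟪gt x, wk - v⟫ : ℝ)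
    have he3 := le_abs_self (⟪gt x, wk - v⟫ : ℝ)
    have hcore : -(M * |⟪gt x, wk - v⟫|) ≤ (At x - ⟪gt x, v⟫) * ⟪gt x, wk - v⟫ := by
      nlinarith [ha.1, ha.2]
    calc -(M * (dstar x * |⟪gt x, wk - v⟫|)) = dstar x * (-(M * |⟪gt x, wk - v⟫|)) := by ring
      _ ≤ dstar x * ((At x - ⟪gt x, v⟫) * ⟪gt x, wk - v⟫) :=
          mul_le_mul_of_nonneg_left hcore (hdstar0 x)
  have hCS : ∑ x, dstar x * |⟪gt x, wk - v⟫| ≤ Real.sqrt Ds :=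
    sum_abs_le_sqrt hdstar0 hdstar1
  have hsqrt : Real.sqrt Ds ≤ Real.sqrt (2 * κ' * er / (1 - γ)) :=
    Real.sqrt_le_sqrt hDstar
  have h7 : quadLoss dstar At gt v ≤ quadLoss dstar Ad gg wk' + 2 * M * η :=
    quadLoss_compare hdstar0 hdstar1 hM0 hη0 (hres At gt v hAt hgt hv)
      (hres Ad gg wk' hAd hgg hwk') hdv
  have t1 : -(2 * C) ≤ 2 * M * Real.sqrt (2 * κ' * er / (1 - γ)) := by
    have s1 : M * ∑ x, dstar x * |⟪gt x, wk - v⟫| ≤ M * Real.sqrt Ds :=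
      mul_le_mul_of_nonneg_left hCS hM0
    have s2 : M * Real.sqrt Ds ≤ M * Real.sqrt (2 * κ' * er / (1 - γ)) :=
      mul_le_mul_of_nonneg_left hsqrt hM0
    linarith
  have h5 : er = 2 * M * η := her
  calc quadLoss dstar At gt wk
      = quadLoss dstar At gt v - 2 * 1 * C + 1 ^ 2 * Ds := hexp
    _ ≤ (quadLoss dstar Ad gg wk' + 2 * M * η)
        + 2 * M * Real.sqrt (2 * κ' * er / (1 - γ)) + 2 * κ' * er / (1 - γ) := by
        have e1 : quadLoss dstar At gt v - 2 * 1 * C + 1 ^ 2 * Ds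
            = quadLoss dstar At gt v + -(2 * C) + Ds := by ring
        rw [e1]
        exact add_le_add (add_le_add h7 t1) hDstar
    _ = quadLoss dstar Ad gg wk' + er
        + 2 * M * Real.sqrt (2 * κ' * er / (1 - γ)) + 2 * κ' * er / (1 - γ) := by
        rw [h5]



/-- Bias-localization bound: the localized bias `ε_{bias,r}` is at most
the non-localized bias `ε_bias` plus a term controlled by
`e_r = (4/(1-γ) + 2WB)Wω_r + (4/(1-γ) + 2WB)(cψ^{r+1} + c'φ^{r+1})`. -/
theorem stmt15 {K : Type*} [Fintype K] [DecidableEq K] [Nonempty K]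
    (G : SimpleGraph K) (hG : G.Connected) (r : ℕ)
    {S A : K → Type*} [∀ k, Fintype (S k)] [∀ k, DecidableEq (S k)] [∀ k, Nonempty (S k)]
    [∀ k, Fintype (A k)] [∀ k, DecidableEq (A k)] [∀ k, Nonempty (A k)]
    {I : Type*} [Fintype I] [DecidableEq I] (blk : I → K)
    (locIdx : I → Prop) [DecidablePred locIdx]
    (P : ∀ k, (∀ j, S j) × (∀ j, A j) → S k → ℝ)
    (hP0 : ∀ k x y, 0 ≤ P k x y) (hP1 : ∀ k x, ∑ y, P k x y = 1)
    (rw : ∀ k, S k → A k → ℝ) (hrw : ∀ k s a, 0 ≤ rw k s a ∧ rw k s a ≤ 1)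
    (γ : ℝ) (hγ0 : 0 ≤ γ) (hγ1 : γ < 1)
    -- parameterized factorized policy
    (πk : ∀ k : K, EuclideanSpace ℝ I → (∀ j, S j) → A k → ℝ)
    (hπk0 : ∀ k θ s a, 0 < πk k θ s a) (hπk1 : ∀ k θ s, ∑ a, πk k θ s a = 1)
    (hπkblk : ∀ k (θ θ' : EuclideanSpace ℝ I),
      (∀ i, blk i = k → θ i = θ' i) → πk k θ = πk k θ')
    (Pol : EuclideanSpace ℝ I → (∀ j, S j) → (∀ j, A j) → ℝ)
    (hPol : ∀ θ s a, Pol θ s a = ∏ k, πk k θ s (a k))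
    -- local-policy assumption at radius r
    (hπloc : ∀ k (θ : EuclideanSpace ℝ I),
      (∀ i, blk i = k → ¬ locIdx i → θ i = 0) →
      ∀ s s' : ∀ j, S j, (∀ j, G.dist k j ≤ r → s j = s' j) → πk k θ s = πk k θ s')
    (hgradloc : ∀ k (θ : EuclideanSpace ℝ I),
      (∀ i, blk i = k → ¬ locIdx i → θ i = 0) →
      ∀ (s s' : ∀ j, S j) (ak : A k), (∀ j, G.dist k j ≤ r → s j = s' j) →
        projGrad (fun i => blk i = k ∧ locIdx i)
            (fun θ' => Real.log (πk k θ' s ak)) θ =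
          projGrad (fun i => blk i = k ∧ locIdx i)
            (fun θ' => Real.log (πk k θ' s' ak)) θ)
    -- the fixed parameter θ, with vanishing nonlocal blocks
    (θ : EuclideanSpace ℝ I) (hθloc : ∀ i, ¬ locIdx i → θ i = 0)
    -- localizing distributions λ_k
    (lam : ∀ _ : K, (∀ j, S j) × (∀ j, A j) → ℝ)
    (hlam0 : ∀ k y, 0 ≤ lam k y) (hlam1 : ∀ k, ∑ y, lam k y = 1)
    -- start distributions and optimal comparator policy
    (μs : (∀ j, S j) → ℝ) (hμs0 : ∀ s, 0 ≤ μs s) (hμs1 : ∑ s, μs s = 1)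
    (ν : (∀ j, S j) × (∀ j, A j) → ℝ) (hν0 : ∀ x, 0 ≤ ν x) (hν1 : ∑ x, ν x = 1)
    (pstar : (∀ j, S j) → (∀ j, A j) → ℝ)
    (hpstar0 : ∀ s a, 0 ≤ pstar s a) (hpstar1 : ∀ s, ∑ a, pstar s a = 1)
    (hopt : ∀ p : (∀ j, S j) → (∀ j, A j) → ℝ, (∀ s a, 0 ≤ p s a) →
      (∀ s, ∑ a, p s a = 1) → VrhoG P p rw γ μs ≤ VrhoG P pstar rw γ μs)
    (W B ωr κ' : ℝ) (hW : 0 ≤ W) (hB : 0 ≤ B) (hωr : 0 ≤ ωr) (hκ'0 : 0 ≤ κ')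
    -- (i) gradient norm bounds
    (hgradB : ∀ k (s : ∀ j, S j) (ak : A k),
      ‖projGrad (fun i => blk i = k) (fun θ' => Real.log (πk k θ' s ak)) θ‖ ≤ B)
    (hgradω : ∀ k (s : ∀ j, S j) (ak : A k),
      ‖projGrad (fun i => blk i = k ∧ ¬ locIdx i)
        (fun θ' => Real.log (πk k θ' s ak)) θ‖ ≤ ωr)
    -- (ii) exponential decay property
    (c c' ψ φ : ℝ) (hc : 0 ≤ c) (hc' : 0 ≤ c') (hψ : 0 < ψ) (hψ1 : ψ < 1)
    (hφ : 0 < φ) (hφ1 : φ < 1)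
    (hQdecay : ∀ (k : K) (r' : ℕ) (s st : ∀ l, S l) (a at' : ∀ l, A l),
      (∀ j, G.dist k j ≤ r' → s j = st j ∧ a j = at' j) →
      |QfunG P (Pol θ) rw γ k (s, a) - QfunG P (Pol θ) rw γ k (st, at')| ≤
        c * ψ ^ (r' + 1))
    (hVdecay : ∀ (k : K) (r' : ℕ) (s st : ∀ l, S l),
      (∀ j, G.dist k j ≤ r' → s j = st j) →
      |VfunG P (Pol θ) rw γ k s - VfunG P (Pol θ) rw γ k st| ≤ c' * φ ^ (r' + 1))
    -- (iii) relative condition number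
    (hκ' : ∀ k, ∀ v : EuclideanSpace ℝ I,
      (∑ x : (∀ j, S j) × (∀ j, A j),
        (dvisit P pstar γ μs x.1 * pstar x.1 x.2) *
          ⟪projGrad (fun i => blk i = k ∧ locIdx i)
            (fun θ' => Real.log (πk k θ' x.1 (x.2 k))) θ, v⟫ ^ 2) ≤
      κ' * ∑ x : (∀ j, S j) × (∀ j, A j), ν x *
          ⟪projGrad (fun i => blk i = k ∧ locIdx i)
            (fun θ' => Real.log (πk k θ' x.1 (x.2 k))) θ, v⟫ ^ 2)
    -- minimizers of the localized and non-localized losses over the W-ball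
    (wstar wstar' : ∀ _ : K, EuclideanSpace ℝ I)
    (hwstar : ∀ k, ‖wstar k‖ ≤ W ∧
      (∀ i, ¬ (blk i = k ∧ locIdx i) → wstar k i = 0) ∧
      ∀ v : EuclideanSpace ℝ I, ‖v‖ ≤ W →
        (∀ i, ¬ (blk i = k ∧ locIdx i) → v i = 0) →
        quadLoss (dvisitSA P (Pol θ) γ ν) (Atilde G r P (Pol θ) rw γ lam k)
            (fun x => projGrad (fun i => blk i = k ∧ locIdx i)
              (fun θ' => Real.log (πk k θ' x.1 (x.2 k))) θ) (wstar k) ≤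
          quadLoss (dvisitSA P (Pol θ) γ ν) (Atilde G r P (Pol θ) rw γ lam k)
            (fun x => projGrad (fun i => blk i = k ∧ locIdx i)
              (fun θ' => Real.log (πk k θ' x.1 (x.2 k))) θ) v)
    (hwstar' : ∀ k, ‖wstar' k‖ ≤ W ∧
      (∀ i, blk i ≠ k → wstar' k i = 0) ∧
      ∀ v : EuclideanSpace ℝ I, ‖v‖ ≤ W → (∀ i, blk i ≠ k → v i = 0) →
        quadLoss (dvisitSA P (Pol θ) γ ν) (AdvLoc P (Pol θ) rw γ k)
            (fun x => projGrad (fun i => blk i = k)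
              (fun θ' => Real.log (πk k θ' x.1 (x.2 k))) θ) (wstar' k) ≤
          quadLoss (dvisitSA P (Pol θ) γ ν) (AdvLoc P (Pol θ) rw γ k)
            (fun x => projGrad (fun i => blk i = k)
              (fun θ' => Real.log (πk k θ' x.1 (x.2 k))) θ) v) :
    -- conclusion: ε_{bias,r} ≤ ε_bias + e_r + 2(2/(1-γ)+WB)√(2κ'e_r/(1-γ)) + 2κ'e_r/(1-γ)
    (Finset.univ.sup' Finset.univ_nonempty fun k =>
        quadLoss (fun x => dvisit P pstar γ μs x.1 * pstar x.1 x.2)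
          (Atilde G r P (Pol θ) rw γ lam k)
          (fun x => projGrad (fun i => blk i = k ∧ locIdx i)
            (fun θ' => Real.log (πk k θ' x.1 (x.2 k))) θ) (wstar k)) ≤
      (Finset.univ.sup' Finset.univ_nonempty fun k =>
        quadLoss (fun x => dvisit P pstar γ μs x.1 * pstar x.1 x.2)
          (AdvLoc P (Pol θ) rw γ k)
          (fun x => projGrad (fun i => blk i = k)
            (fun θ' => Real.log (πk k θ' x.1 (x.2 k))) θ) (wstar' k)) +
      ((4 / (1 - γ) + 2 * W * B) * W * ωr +
        (4 / (1 - γ) + 2 * W * B) * (c * ψ ^ (r + 1) + c' * φ ^ (r + 1))) +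
      2 * (2 / (1 - γ) + W * B) *
        Real.sqrt (2 * κ' * ((4 / (1 - γ) + 2 * W * B) * W * ωr +
          (4 / (1 - γ) + 2 * W * B) * (c * ψ ^ (r + 1) + c' * φ ^ (r + 1))) / (1 - γ)) +
      2 * κ' * ((4 / (1 - γ) + 2 * W * B) * W * ωr +
        (4 / (1 - γ) + 2 * W * B) * (c * ψ ^ (r + 1) + c' * φ ^ (r + 1))) / (1 - γ) := by
    classical
  have hγg : (0:ℝ) < 1 - γ := by linarith
  -- policy facts
  have hPol0 : ∀ s a, 0 ≤ Pol θ s a := fun s a => by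
    rw [hPol]
    exact Finset.prod_nonneg fun j _ => (hπk0 j θ s (a j)).le
  have hPol1 : ∀ s, ∑ a, Pol θ s a = 1 := fun s => by
    calc ∑ a, Pol θ s a = ∑ a : ∀ j, A j, ∏ j, πk j θ s (a j) :=
        Finset.sum_congr rfl fun a _ => hPol θ s a
      _ = ∏ j, ∑ b, πk j θ s b := sum_pi_prod _
      _ = 1 := by simp [hπk1]
  -- distribution facts
  have hdstar0 : ∀ x : (∀ j, S j) × (∀ j, A j),
      0 ≤ dvisit P pstar γ μs x.1 * pstar x.1 x.2 := fun x => by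
    refine mul_nonneg ?_ (hpstar0 _ _)
    simp only [dvisit]
    exact mix_disc_nonneg hγ0 hγ1 (stateKernel_nonneg hP0 hpstar0) hμs0 x.1
  have hdstar1 : ∑ x : (∀ j, S j) × (∀ j, A j),
      dvisit P pstar γ μs x.1 * pstar x.1 x.2 ≤ 1 := by
    rw [Fintype.sum_prod_type]
    have h1 : ∀ s : ∀ j, S j,
        (∑ a : ∀ j, A j, dvisit P pstar γ μs s * pstar s a) = dvisit P pstar γ μs s := by
      intro s; rw [← Finset.mul_sum, hpstar1, mul_one]
    rw [Finset.sum_congr rfl fun s _ => h1 s]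
    apply le_of_eq
    exact mix_disc_total hγ0 hγ1 (stateKernel_nonneg hP0 hpstar0)
      (stateKernel_sum hP1 hpstar1) hμs0 hμs1
  have hdd0 : ∀ x, 0 ≤ dvisitSA P (Pol θ) γ ν x := fun x => by
    simp only [dvisitSA]
    exact mix_disc_nonneg hγ0 hγ1 (saKernelG_nonneg hP0 hPol0) hν0 x
  have hdd1 : ∑ x, dvisitSA P (Pol θ) γ ν x ≤ 1 := by
    apply le_of_eq
    simp only [dvisitSA]
    exact mix_disc_total hγ0 hγ1 (saKernelG_nonneg hP0 hPol0)
      (saKernelG_sum hP1 hPol1) hν0 hν1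
  have hddν : ∀ x, (1 - γ) * ν x ≤ dvisitSA P (Pol θ) γ ν x := fun x => by
    simp only [dvisitSA]
    exact mix_disc_ge hγ0 hγ1 (saKernelG_nonneg hP0 hPol0)
      (saKernelG_sum hP1 hPol1) hν0 hν1 x
  -- value-function bounds for the fixed policy
  have hQb := fun (k : K) (x : (∀ j, S j) × (∀ j, A j)) =>
    QfunG_bounds hP0 hP1 hPol0 hPol1 hrw hγ0 hγ1 k x
  have hVb := fun (k : K) (s : ∀ j, S j) =>
    VfunG_bounds hP0 hP1 hPol0 hPol1 hrw hγ0 hγ1 k s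
  have hInv2 : (1 - γ)⁻¹ ≤ 2 / (1 - γ) := by
    rw [div_eq_mul_inv]
    nlinarith [inv_nonneg.mpr hγg.le]
  have hAdb : ∀ (k : K) x, |AdvLoc P (Pol θ) rw γ k x| ≤ 2 / (1 - γ) := by
    intro k x
    simp only [AdvLoc]
    obtain ⟨h1, h2⟩ := hQb k x
    obtain ⟨h3, h4⟩ := hVb k x.1
    rw [abs_le]
    constructor <;> linarith
  have hQtb : ∀ (k : K) x, 0 ≤ Qtilde G r P (Pol θ) rw γ lam k x ∧
      Qtilde G r P (Pol θ) rw γ lam k x ≤ (1 - γ)⁻¹ := by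
    intro k x
    simp only [Qtilde]
    constructor
    · exact Finset.sum_nonneg fun y _ => mul_nonneg (hlam0 k y) (hQb k _).1
    · have h1 : (∑ y : (∀ j, S j) × (∀ j, A j), lam k y * (1 - γ)⁻¹) = (1 - γ)⁻¹ := by
        rw [← Finset.sum_mul, hlam1, one_mul]
      rw [← h1]
      exact Finset.sum_le_sum fun y _ =>
        mul_le_mul_of_nonneg_left (hQb k _).2 (hlam0 k y)
  have hVtb : ∀ (k : K) (s : ∀ j, S j), 0 ≤ Vtilde G r P (Pol θ) rw γ lam k s ∧
      Vtilde G r P (Pol θ) rw γ lam k s ≤ (1 - γ)⁻¹ := by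
    intro k s
    simp only [Vtilde]
    constructor
    · exact Finset.sum_nonneg fun y _ => mul_nonneg (hlam0 k y) (hVb k _).1
    · have h1 : (∑ y : (∀ j, S j) × (∀ j, A j), lam k y * (1 - γ)⁻¹) = (1 - γ)⁻¹ := by
        rw [← Finset.sum_mul, hlam1, one_mul]
      rw [← h1]
      exact Finset.sum_le_sum fun y _ =>
        mul_le_mul_of_nonneg_left (hVb k _).2 (hlam0 k y)
  have hAtb : ∀ (k : K) x, |Atilde G r P (Pol θ) rw γ lam k x| ≤ 2 / (1 - γ) := by
    intro k x
    simp only [Atilde]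
    obtain ⟨h1, h2⟩ := hQtb k x
    obtain ⟨h3, h4⟩ := hVtb k x.1
    rw [abs_le]
    constructor <;> linarith
  have hδ0 : (0:ℝ) ≤ c * ψ ^ (r + 1) + c' * φ ^ (r + 1) := by positivity
  -- closeness of localized and plain advantage
  have hclose : ∀ (k : K) x, |Atilde G r P (Pol θ) rw γ lam k x - AdvLoc P (Pol θ) rw γ k x|
      ≤ c * ψ ^ (r + 1) + c' * φ ^ (r + 1) := by
    intro k x
    have hQc : |Qtilde G r P (Pol θ) rw γ lam k x - QfunG P (Pol θ) rw γ k x|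
        ≤ c * ψ ^ (r + 1) := by
      simp only [Qtilde]
      apply tilde_close_aux (hlam0 k) (hlam1 k)
      intro y
      rw [abs_sub_comm]
      exact hQdecay k r x.1 (fun j => if G.dist k j ≤ r then x.1 j else y.1 j)
        x.2 (fun j => if G.dist k j ≤ r then x.2 j else y.2 j)
        (fun j hj => ⟨(if_pos hj).symm, (if_pos hj).symm⟩)
    have hVc : |Vtilde G r P (Pol θ) rw γ lam k x.1 - VfunG P (Pol θ) rw γ k x.1|
        ≤ c' * φ ^ (r + 1) := by
      simp only [Vtilde]
      apply tilde_close_aux (hlam0 k) (hlam1 k)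
      intro y
      rw [abs_sub_comm]
      exact hVdecay k r x.1 (fun j => if G.dist k j ≤ r then x.1 j else y.1 j)
        (fun j hj => (if_pos hj).symm)
    have heq : Atilde G r P (Pol θ) rw γ lam k x - AdvLoc P (Pol θ) rw γ k x
        = (Qtilde G r P (Pol θ) rw γ lam k x - QfunG P (Pol θ) rw γ k x)
          - (Vtilde G r P (Pol θ) rw γ lam k x.1 - VfunG P (Pol θ) rw γ k x.1) := by
      simp only [Atilde, AdvLoc]; ring
    rw [heq]
    calc |(Qtilde G r P (Pol θ) rw γ lam k x - QfunG P (Pol θ) rw γ k x)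
          - (Vtilde G r P (Pol θ) rw γ lam k x.1 - VfunG P (Pol θ) rw γ k x.1)|
        ≤ |Qtilde G r P (Pol θ) rw γ lam k x - QfunG P (Pol θ) rw γ k x|
          + |Vtilde G r P (Pol θ) rw γ lam k x.1 - VfunG P (Pol θ) rw γ k x.1| :=
          abs_sub _ _
      _ ≤ c * ψ ^ (r + 1) + c' * φ ^ (r + 1) := add_le_add hQc hVc
  -- now bound the supremum termwise
  apply Finset.sup'_le
  intro k _
  obtain ⟨hwkW, hwksupp, hwkmin⟩ := hwstar k
  obtain ⟨hwk'W, hwk'supp, hwk'min⟩ := hwstar' k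
  set v : EuclideanSpace ℝ I := WithLp.toLp 2 (fun i => if locIdx i then wstar' k i else 0) with hvdef
  have hvW : ‖v‖ ≤ W := by
    refine le_trans ?_ hwk'W
    rw [norm_eu, norm_eu]
    apply Real.sqrt_le_sqrt
    apply Finset.sum_le_sum
    intro i _
    have hvi : v i = if locIdx i then wstar' k i else 0 := rfl
    rw [hvi]
    by_cases h : locIdx i
    · rw [if_pos h]
    · rw [if_neg h]
      simpa using sq_nonneg (wstar' k i)
  have hvsupp : ∀ i, ¬ (blk i = k ∧ locIdx i) → v i = 0 := by
    intro i hi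
    have hvi : v i = if locIdx i then wstar' k i else 0 := rfl
    rw [hvi]
    by_cases h : locIdx i
    · rw [if_pos h]
      exact hwk'supp i (fun hb => hi ⟨hb, h⟩)
    · rw [if_neg h]
  -- feature bounds
  have hgtB : ∀ x : (∀ j, S j) × (∀ j, A j),
      ‖projGrad (fun i => blk i = k ∧ locIdx i)
        (fun θ' => Real.log (πk k θ' x.1 (x.2 k))) θ‖ ≤ B := fun x =>
    le_trans (projGrad_norm_mono (fun i => blk i = k) _ (fun i h => h.1) _ _)
      (hgradB k x.1 (x.2 k))
  have hggB : ∀ x : (∀ j, S j) × (∀ j, A j),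
      ‖projGrad (fun i => blk i = k)
        (fun θ' => Real.log (πk k θ' x.1 (x.2 k))) θ‖ ≤ B := fun x =>
    hgradB k x.1 (x.2 k)
  have hhhω : ∀ x : (∀ j, S j) × (∀ j, A j),
      ‖projGrad (fun i => blk i = k ∧ ¬ locIdx i)
        (fun θ' => Real.log (πk k θ' x.1 (x.2 k))) θ‖ ≤ ωr := fun x =>
    hgradω k x.1 (x.2 k)
  have hsplitk : ∀ (x : (∀ j, S j) × (∀ j, A j)) (w : EuclideanSpace ℝ I),
      ⟪projGrad (fun i => blk i = k) (fun θ' => Real.log (πk k θ' x.1 (x.2 k))) θ, w⟫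
        = ⟪projGrad (fun i => blk i = k ∧ locIdx i)
            (fun θ' => Real.log (πk k θ' x.1 (x.2 k))) θ, w⟫
          + ⟪projGrad (fun i => blk i = k ∧ ¬ locIdx i)
            (fun θ' => Real.log (πk k θ' x.1 (x.2 k))) θ, w⟫ := fun x w =>
    inner_split (fun i => blk i = k) locIdx _ θ w
  have hhwk : ∀ x : (∀ j, S j) × (∀ j, A j),
      ⟪projGrad (fun i => blk i = k ∧ ¬ locIdx i)
        (fun θ' => Real.log (πk k θ' x.1 (x.2 k))) θ, wstar k⟫ = 0 := by
    intro x
    rw [inner_eu]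
    apply Finset.sum_eq_zero
    intro i _
    by_cases h : blk i = k ∧ ¬ locIdx i
    · rw [hwksupp i (fun hc => h.2 hc.2), mul_zero]
    · have : projGrad (fun i => blk i = k ∧ ¬ locIdx i)
          (fun θ' => Real.log (πk k θ' x.1 (x.2 k))) θ i = 0 := by
        simp only [projGrad, PiLp.toLp_apply]
        rw [if_neg h]
      rw [this, zero_mul]
  have hgtv : ∀ x : (∀ j, S j) × (∀ j, A j),
      ⟪projGrad (fun i => blk i = k ∧ locIdx i)
        (fun θ' => Real.log (πk k θ' x.1 (x.2 k))) θ, v⟫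
      = ⟪projGrad (fun i => blk i = k ∧ locIdx i)
        (fun θ' => Real.log (πk k θ' x.1 (x.2 k))) θ, wstar' k⟫ := by
    intro x
    apply inner_eq_of_agree
    intro i hgi
    have hsel : blk i = k ∧ locIdx i := by
      by_contra h
      apply hgi
      simp only [projGrad, PiLp.toLp_apply]
      rw [if_neg h]
    have hvi : v i = if locIdx i then wstar' k i else 0 := rfl
    rw [hvi, if_pos hsel.2]
  -- minimality of wstar k along the segment towards v
  have hminseg : ∀ t : ℝ, 0 < t → t ≤ 1 →
      quadLoss (dvisitSA P (Pol θ) γ ν) (Atilde G r P (Pol θ) rw γ lam k)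
        (fun x => projGrad (fun i => blk i = k ∧ locIdx i)
          (fun θ' => Real.log (πk k θ' x.1 (x.2 k))) θ) (wstar k)
      ≤ quadLoss (dvisitSA P (Pol θ) γ ν) (Atilde G r P (Pol θ) rw γ lam k)
        (fun x => projGrad (fun i => blk i = k ∧ locIdx i)
          (fun θ' => Real.log (πk k θ' x.1 (x.2 k))) θ)
        (wstar k + t • (v - wstar k)) := by
    intro t ht0 ht1
    apply hwkmin
    · have heq : wstar k + t • (v - wstar k) = (1 - t) • wstar k + t • v := by
        rw [smul_sub, sub_smul, one_smul]
        abel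
      rw [heq]
      calc ‖(1 - t) • wstar k + t • v‖ ≤ ‖(1 - t) • wstar k‖ + ‖t • v‖ := norm_add_le _ _
        _ = (1 - t) * ‖wstar k‖ + t * ‖v‖ := by
            rw [norm_smul, norm_smul, Real.norm_eq_abs, Real.norm_eq_abs,
              abs_of_nonneg (by linarith : (0:ℝ) ≤ 1 - t), abs_of_nonneg ht0.le]
        _ ≤ (1 - t) * W + t * W :=
            add_le_add (mul_le_mul_of_nonneg_left hwkW (by linarith))
              (mul_le_mul_of_nonneg_left hvW ht0.le)
        _ = W := by ring
    · intro i hi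
      have h1 : wstar k i = 0 := hwksupp i hi
      have h2 : v i = 0 := hvsupp i hi
      have h3 : (wstar k + t • (v - wstar k)) i = wstar k i + t * (v i - wstar k i) := rfl
      rw [h3, h1, h2]
      ring
  have hmin' : quadLoss (dvisitSA P (Pol θ) γ ν) (AdvLoc P (Pol θ) rw γ k)
        (fun x => projGrad (fun i => blk i = k)
          (fun θ' => Real.log (πk k θ' x.1 (x.2 k))) θ) (wstar' k)
      ≤ quadLoss (dvisitSA P (Pol θ) γ ν) (AdvLoc P (Pol θ) rw γ k)
        (fun x => projGrad (fun i => blk i = k)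
          (fun θ' => Real.log (πk k θ' x.1 (x.2 k))) θ) (wstar k) :=
    hwk'min (wstar k) hwkW (fun i hb => hwksupp i (fun hc => hb hc.1))
  -- apply the abstract bound
  have hkey := key_bound (X := (∀ j, S j) × (∀ j, A j))
    (dstar := fun x => dvisit P pstar γ μs x.1 * pstar x.1 x.2)
    (dd := dvisitSA P (Pol θ) γ ν) (ν := ν)
    (At := Atilde G r P (Pol θ) rw γ lam k) (Ad := AdvLoc P (Pol θ) rw γ k)
    (gt := fun x => projGrad (fun i => blk i = k ∧ locIdx i)
      (fun θ' => Real.log (πk k θ' x.1 (x.2 k))) θ)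
    (gg := fun x => projGrad (fun i => blk i = k)
      (fun θ' => Real.log (πk k θ' x.1 (x.2 k))) θ)
    (hh := fun x => projGrad (fun i => blk i = k ∧ ¬ locIdx i)
      (fun θ' => Real.log (πk k θ' x.1 (x.2 k))) θ)
    (wk := wstar k) (wk' := wstar' k) (v := v)
    (W := W) (B := B) (ωr := ωr) (κ' := κ') (γ := γ)
    (δ := c * ψ ^ (r + 1) + c' * φ ^ (r + 1))
    (M := 2 / (1 - γ) + W * B)
    (er := (4 / (1 - γ) + 2 * W * B) * W * ωr +
      (4 / (1 - γ) + 2 * W * B) * (c * ψ ^ (r + 1) + c' * φ ^ (r + 1)))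
    hγ1 hW hB hωr hκ'0 hδ0 rfl (by ring)
    hdstar0 hdstar1 hdd0 hdd1 hν0 hddν
    (hAtb k) (hAdb k) (hclose k) hgtB hggB hsplitk hhhω
    hwkW hwk'W hvW hhwk hgtv hminseg hmin'
    (hκ' k (wstar k - v))
  have hsup := Finset.le_sup' (f := fun k =>
      quadLoss (fun x => dvisit P pstar γ μs x.1 * pstar x.1 x.2)
        (AdvLoc P (Pol θ) rw γ k)
        (fun x => projGrad (fun i => blk i = k)
          (fun θ' => Real.log (πk k θ' x.1 (x.2 k))) θ) (wstar' k))
    (Finset.mem_univ k)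
  linarith [hkey, hsup]
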